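/- arXiv:1108.1093 — 2 statements merged into one kernel-verified Lean document; each statement's English description precedes it below -/
import Mathlib

section
/- Let h0, h1 be orientation-preserving circle diffeomorphisms, each with a unique hyperbolic attracting fixed point p0, p1 respectively, such that h0 and h1 are affine contractions on an interval [p0, p1] with derivatives λ0 = h0'(p0), λ1 = h1'(p1) satisfying 1/2 < λ0, λ1 < 1. Then for any nonempty open subinterval J ⊆ [p0,p1], the union of the images of J under all finite compositions of h0 and h1 is dense in [p0,p1]; i.e., the iterated function system generated by h0, h1 is minimal on [p0,p1]. -/
/-!
Since `λ₀ + λ₁ > 1`, the images `h₀ I` and `h₁ I` of `I = [p₀, p₁]` overlap and cover `I`, so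
every point of `I` lies in `w(I)` for words `w` of every length `n`. Such a word contracts `I` by
at least `max(λ₀, λ₁)ⁿ`, hence the image `w(J)` of any subinterval `J` comes arbitrarily close to
every point of `w(I)`.
-/

/-- Application of a finite word in the two generators: `wordComp h [a₁, …, a_k] = h_{a₁} ∘ ⋯ ∘ h_{a_k}`. -/
def wordComp {X : Type*} (h : Fin 2 → X → X) : List (Fin 2) → X → X
  | [], x => x
  | a :: w, x => h a (wordComp h w x)

open Set Metric
open scoped NNReal

section Homothety

variable {E : Type*} [NormedAddCommGroup E] [NormedSpace ℝ E] {f : E → E} {s : Set E} {p : E}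
  {l : ℝ}

theorem mapsTo_of_eq_homothety (hs : Convex ℝ s) (hp : p ∈ s) (hl : l ∈ Icc (0 : ℝ) 1)
    (hf : ∀ x ∈ s, f x = p + l • (x - p)) : MapsTo f s s := fun x hx => by
  rw [hf x hx]
  exact hs.add_smul_sub_mem hp hx hl

theorem lipschitzOnWith_of_eq_homothety (hf : ∀ x ∈ s, f x = p + l • (x - p)) :
    LipschitzOnWith ‖l‖₊ f s :=
  LipschitzOnWith.of_dist_le_mul fun x hx y hy => by
    rw [hf x hx, hf y hy, dist_eq_norm, dist_eq_norm, add_sub_add_left_eq_sub, ← smul_sub,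
      sub_sub_sub_cancel_right, norm_smul, coe_nnnorm]

end Homothety

theorem image_Icc_of_eq_homothety {f : ℝ → ℝ} {a b p l : ℝ} (hl : 0 < l)
    (hf : ∀ x ∈ Icc a b, f x = p + l * (x - p)) :
    f '' Icc a b = Icc (p + l * (a - p)) (p + l * (b - p)) := by
  have hf' : f '' Icc a b = (l * · + (p - l * p)) '' Icc a b :=
    EqOn.image_eq fun x hx => (hf x hx).trans (by ring)
  rw [hf', image_affine_Icc' hl]
  congr 1 <;> ring

theorem Icc_subset_image_union_image_of_eq_homothety {f₀ f₁ : ℝ → ℝ} {p₀ p₁ l₀ l₁ : ℝ}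
    (hp : p₀ ≤ p₁) (hl₀ : 0 < l₀) (hl₁ : 0 < l₁) (hl : 1 ≤ l₀ + l₁)
    (hf₀ : ∀ x ∈ Icc p₀ p₁, f₀ x = p₀ + l₀ * (x - p₀))
    (hf₁ : ∀ x ∈ Icc p₀ p₁, f₁ x = p₁ + l₁ * (x - p₁)) :
    Icc p₀ p₁ ⊆ f₀ '' Icc p₀ p₁ ∪ f₁ '' Icc p₀ p₁ := by
  rw [image_Icc_of_eq_homothety hl₀ hf₀, image_Icc_of_eq_homothety hl₁ hf₁]
  refine (Icc_subset_Icc_union_Icc (b := p₀ + l₀ * (p₁ - p₀))).trans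
    (union_subset_union (Icc_subset_Icc ?_ le_rfl) (Icc_subset_Icc ?_ ?_)) <;> nlinarith

section Words

variable {X : Type*} {h : Fin 2 → X → X} {s : Set X}

theorem mapsTo_wordComp (hmaps : ∀ i, MapsTo (h i) s s) : ∀ w, MapsTo (wordComp h w) s s
  | [] => mapsTo_id s
  | a :: w => fun _ hx => hmaps a (mapsTo_wordComp hmaps w hx)

theorem lipschitzOnWith_wordComp [PseudoEMetricSpace X] {K : ℝ≥0}
    (hmaps : ∀ i, MapsTo (h i) s s) (hlip : ∀ i, LipschitzOnWith K (h i) s) :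
    ∀ w, LipschitzOnWith (K ^ w.length) (wordComp h w) s
  | [] => by
    rw [List.length_nil, pow_zero]
    exact LipschitzWith.id.lipschitzOnWith
  | a :: w => by
    rw [List.length_cons, pow_succ']
    exact (hlip a).comp (lipschitzOnWith_wordComp hmaps hlip w) (mapsTo_wordComp hmaps w)

theorem exists_length_eq_mem_wordComp_image (hcover : s ⊆ ⋃ i, h i '' s) :
    ∀ (n : ℕ) {z}, z ∈ s → ∃ w : List (Fin 2), w.length = n ∧ z ∈ wordComp h w '' s
  | 0, z, hz => ⟨[], rfl, z, hz, rfl⟩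
  | n + 1, z, hz => by
    obtain ⟨i, y, hy, rfl⟩ := mem_iUnion.1 (hcover hz)
    obtain ⟨w, hw, x, hx, rfl⟩ := exists_length_eq_mem_wordComp_image hcover n hy
    exact ⟨i :: w, by rw [List.length_cons, hw], x, hx, rfl⟩

theorem subset_closure_iUnion_wordComp_image [PseudoMetricSpace X] {K : ℝ≥0}
    (hs : Bornology.IsBounded s) (hmaps : ∀ i, MapsTo (h i) s s)
    (hlip : ∀ i, LipschitzOnWith K (h i) s) (hK : K < 1) (hcover : s ⊆ ⋃ i, h i '' s)
    {U : Set X} (hU : U ⊆ s) (hU_ne : U.Nonempty) :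
    s ⊆ closure (⋃ w, wordComp h w '' U) := by
  intro z hz
  rw [Metric.mem_closure_iff]
  intro ε hε
  obtain ⟨x, hxU⟩ := hU_ne
  have hpow : Filter.Tendsto (fun n : ℕ => (K : ℝ) ^ n * diam s) Filter.atTop (nhds 0) := by
    simpa using (tendsto_pow_atTop_nhds_zero_of_lt_one K.coe_nonneg hK).mul_const (diam s)
  obtain ⟨n, hn⟩ := (hpow.eventually (gt_mem_nhds hε)).exists
  obtain ⟨w, rfl, y, hy, rfl⟩ := exists_length_eq_mem_wordComp_image hcover n hz
  refine ⟨wordComp h w x, mem_iUnion.2 ⟨w, mem_image_of_mem _ hxU⟩, ?_⟩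
  calc dist (wordComp h w y) (wordComp h w x)
      ≤ ↑(K ^ w.length) * dist y x :=
        (lipschitzOnWith_wordComp hmaps hlip w).dist_le_mul y hy x (hU hxU)
    _ ≤ K ^ w.length * diam s := by
        push_cast
        gcongr
        exact dist_le_diam_of_mem hs hy (hU hxU)
    _ < ε := hn

end Words

/-- Minimality of the iterated function system generated by two affine contractions on
`[p₀,p₁]`: if `h₀, h₁` are affine on `[p₀,p₁]` with `h₀(x) = p₀ + λ₀(x-p₀)`,
`h₁(x) = p₁ + λ₁(x-p₁)` and slopes `λ₀, λ₁ ∈ (1/2, 1)`, then for every nonempty open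
subinterval `J = (a,b) ⊆ [p₀,p₁]` the union of the images of `J` under all finite
compositions of `h₀` and `h₁` is dense in `[p₀,p₁]`. -/
theorem ifs_two_affine_contractions_minimal
    (p₀ p₁ : ℝ) (hp : p₀ < p₁) (l₀ l₁ : ℝ)
    (hl₀ : 1 / 2 < l₀ ∧ l₀ < 1) (hl₁ : 1 / 2 < l₁ ∧ l₁ < 1)
    (h : Fin 2 → ℝ → ℝ)
    (haff₀ : ∀ x ∈ Set.Icc p₀ p₁, h 0 x = p₀ + l₀ * (x - p₀))
    (haff₁ : ∀ x ∈ Set.Icc p₀ p₁, h 1 x = p₁ + l₁ * (x - p₁)) :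
    ∀ a b : ℝ, p₀ ≤ a → a < b → b ≤ p₁ →
      Set.Icc p₀ p₁ ⊆ closure (⋃ w : List (Fin 2), wordComp h w '' Set.Ioo a b) := by
  intro a b hpa hab hbp
  obtain ⟨hl₀_gt, hl₀_lt⟩ := hl₀
  obtain ⟨hl₁_gt, hl₁_lt⟩ := hl₁
  have hmaps : ∀ i, MapsTo (h i) (Icc p₀ p₁) (Icc p₀ p₁) := Fin.forall_fin_two.2
    ⟨mapsTo_of_eq_homothety (convex_Icc p₀ p₁) (left_mem_Icc.2 hp.le) ⟨by linarith, hl₀_lt.le⟩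
      haff₀,
    mapsTo_of_eq_homothety (convex_Icc p₀ p₁) (right_mem_Icc.2 hp.le) ⟨by linarith, hl₁_lt.le⟩
      haff₁⟩
  have hlip : ∀ i, LipschitzOnWith (max ‖l₀‖₊ ‖l₁‖₊) (h i) (Icc p₀ p₁) := Fin.forall_fin_two.2
    ⟨(lipschitzOnWith_of_eq_homothety haff₀).weaken (le_max_left _ _),
      (lipschitzOnWith_of_eq_homothety haff₁).weaken (le_max_right _ _)⟩
  have hK : max ‖l₀‖₊ ‖l₁‖₊ < 1 := by
    rw [max_lt_iff, ← NNReal.coe_lt_one, ← NNReal.coe_lt_one, coe_nnnorm, coe_nnnorm,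
      Real.norm_eq_abs, Real.norm_eq_abs, abs_lt, abs_lt]
    exact ⟨⟨by linarith, hl₀_lt⟩, ⟨by linarith, hl₁_lt⟩⟩
  have hcover : Icc p₀ p₁ ⊆ ⋃ i, h i '' Icc p₀ p₁ := by
    simpa only [subset_def, mem_union, mem_iUnion, Fin.exists_fin_two] using
      Icc_subset_image_union_image_of_eq_homothety hp.le (by linarith) (by linarith)
        (by linarith) haff₀ haff₁
  exact subset_closure_iUnion_wordComp_image (isBounded_Icc p₀ p₁) hmaps hlip hK hcover
    (Ioo_subset_Icc_self.trans (Icc_subset_Icc hpa hbp)) (nonempty_Ioo.2 hab)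
end

section
/- Let h0, h1: [0,1] → [0,1] be affine contractions h0(x) = λ0 x and h1(x) = λ1 x + (1 - λ1) with λ0 + λ1 > 1 and λ0, λ1 ∈ (0,1). Then for any nonempty open interval J ⊆ [0,1] there exists k ∈ N such that the union over all words ω ∈ {0,1}^k of h_{ω_k} ∘ ⋯ ∘ h_{ω_1}(J) is ε-dense in [0,1] for any given ε > 0 (for k large enough depending on ε). -/
/-!
Because `λ₀ + λ₁ > 1`, the two images `h₀[0,1] = [0, λ₀]` and `h₁[0,1] = [1 - λ₁, 1]` cover
`[0,1]`. Hence if every point of `[0,1]` lies within `r` of a set `S`, every point of `[0,1]`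
lies within `max λ₀ λ₁ · r` of `L(S)`: write it as `hᵢ z` with `z ∈ [0,1]` and push a point of
`S` near `z` forward by the contraction `hᵢ`. Starting from any point of `J ⊆ [0,1]` (radius
`2 > diam [0,1]`), `L^k(J)` is `2 (max λ₀ λ₁)^k`-dense.
-/

open Set Metric Bornology NNReal

section MetricSpace

variable {α : Type*} [PseudoMetricSpace α]

theorem LipschitzWith.image_thickening_subset {f : α → α} {K : ℝ≥0} (hf : LipschitzWith K f)
    (hK : K ≠ 0) (r : ℝ) (S : Set α) : f '' thickening r S ⊆ thickening (K * r) (f '' S) := by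
  rintro _ ⟨z, hz, rfl⟩
  obtain ⟨y, hy, hzy⟩ := mem_thickening_iff.1 hz
  exact mem_thickening_iff.2 ⟨f y, mem_image_of_mem f hy, hf.dist_lt_mul_of_lt hK hzy⟩

theorem subset_thickening_of_diam_lt {X S : Set α} {y : α} (hyX : y ∈ X) (hyS : y ∈ S)
    (hX : IsBounded X) {r : ℝ} (hr : diam X < r) : X ⊆ thickening r S := fun _ hx =>
  mem_thickening_iff.2 ⟨y, hyS, (dist_le_diam_of_mem hX hx hyX).trans_lt hr⟩

variable {X : Set α} {f g : α → α} {K : ℝ≥0}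

theorem subset_thickening_image_union (hf : LipschitzWith K f) (hg : LipschitzWith K g)
    (hK : K ≠ 0) (hX : X ⊆ f '' X ∪ g '' X) {r : ℝ} {S : Set α} (hS : X ⊆ thickening r S) :
    X ⊆ thickening (K * r) (f '' S ∪ g '' S) := by
  refine hX.trans (union_subset ?_ ?_)
  · exact (image_mono hS).trans
      ((hf.image_thickening_subset hK r S).trans (thickening_subset_of_subset _ subset_union_left))
  · exact (image_mono hS).trans
      ((hg.image_thickening_subset hK r S).trans (thickening_subset_of_subset _ subset_union_right))

theorem subset_thickening_iterate (hf : LipschitzWith K f) (hg : LipschitzWith K g)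
    (hK : K ≠ 0) (hX : X ⊆ f '' X ∪ g '' X) {L : Set α → Set α}
    (hL : ∀ S, L S = f '' S ∪ g '' S) {r : ℝ} {S : Set α} (hS : X ⊆ thickening r S) (k : ℕ) :
    X ⊆ thickening (K ^ k * r) (L^[k] S) := by
  induction k with
  | zero => simpa using hS
  | succ k ih =>
    rw [Function.iterate_succ_apply', hL, pow_succ', mul_assoc]
    exact subset_thickening_image_union hf hg hK hX ih

end MetricSpace

theorem lipschitzWith_of_affine {f : ℝ → ℝ} {c d : ℝ} (hf : ∀ x, f x = c * x + d) {K : ℝ≥0}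
    (hc : |c| ≤ K) : LipschitzWith K f := by
  refine lipschitzWith_iff_dist_le_mul.2 fun x y => ?_
  rw [Real.dist_eq, Real.dist_eq, hf, hf, show c * x + d - (c * y + d) = c * (x - y) by ring,
    abs_mul]
  exact mul_le_mul_of_nonneg_right hc (abs_nonneg _)

theorem Icc_subset_image_union_image {l₀ l₁ : ℝ} (hl₀ : 0 < l₀) (hl₁ : 0 < l₁)
    (hsum : 1 ≤ l₀ + l₁) {h₀ h₁ : ℝ → ℝ} (hh₀ : ∀ x, h₀ x = l₀ * x)
    (hh₁ : ∀ x, h₁ x = l₁ * x + (1 - l₁)) :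
    Icc (0 : ℝ) 1 ⊆ h₀ '' Icc 0 1 ∪ h₁ '' Icc 0 1 := by
  intro x ⟨hx0, hx1⟩
  by_cases hx : x ≤ l₀
  · refine Or.inl ⟨x / l₀, ⟨by positivity, (div_le_one hl₀).2 hx⟩, ?_⟩
    rw [hh₀]
    field_simp
  · refine Or.inr ⟨(x - (1 - l₁)) / l₁,
      ⟨div_nonneg (by linarith) hl₁.le, (div_le_one hl₁).2 (by linarith)⟩, ?_⟩
    rw [hh₁]
    field_simp
    ring

/-- For the affine contractions `h₀(x) = λ₀ x` and `h₁(x) = λ₁ x + (1 - λ₁)` on `[0,1]`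
with `λ₀ + λ₁ > 1` and `λ₀, λ₁ ∈ (0,1)`, the iterates `L^k(J)` of any nonempty open
interval `J = (a,b) ⊆ [0,1]` under the set map `L(S) = h₀(S) ∪ h₁(S)` become `ε`-dense
in `[0,1]`: for every `ε > 0` there is `k` such that every point of `[0,1]` is within
`ε` of `L^k(J)`. -/
theorem ifs_expanding_total_length_eps_dense
    (l₀ l₁ : ℝ) (hl₀ : l₀ ∈ Set.Ioo (0:ℝ) 1) (hl₁ : l₁ ∈ Set.Ioo (0:ℝ) 1)
    (hsum : 1 < l₀ + l₁)
    (h₀ h₁ : ℝ → ℝ) (hh₀ : ∀ x, h₀ x = l₀ * x) (hh₁ : ∀ x, h₁ x = l₁ * x + (1 - l₁))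
    (L : Set ℝ → Set ℝ) (hL : ∀ S, L S = h₀ '' S ∪ h₁ '' S)
    (a b : ℝ) (hab : a < b) (hJ : Set.Ioo a b ⊆ Set.Icc (0:ℝ) 1) :
    ∀ ε > (0:ℝ), ∃ k : ℕ, ∀ x ∈ Set.Icc (0:ℝ) 1,
      ∃ y ∈ L^[k] (Set.Ioo a b), |x - y| < ε := by
  intro ε hε
  let K : ℝ≥0 := ⟨max l₀ l₁, hl₀.1.le.trans (le_max_left _ _)⟩
  have hK : K ≠ 0 := ne_of_gt (lt_max_of_lt_left hl₀.1 : (0 : ℝ) < max l₀ l₁)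
  have hlip₀ : LipschitzWith K h₀ :=
    lipschitzWith_of_affine (d := 0) (by simp [hh₀])
      ((abs_of_pos hl₀.1).trans_le (le_max_left _ _))
  have hlip₁ : LipschitzWith K h₁ :=
    lipschitzWith_of_affine hh₁ ((abs_of_pos hl₁.1).trans_le (le_max_right _ _))
  have hcover := Icc_subset_image_union_image hl₀.1 hl₁.1 hsum.le hh₀ hh₁
  have hmid : (a + b) / 2 ∈ Ioo a b := ⟨by linarith, by linarith⟩
  have hstart : Icc (0 : ℝ) 1 ⊆ thickening 2 (Ioo a b) :=
    subset_thickening_of_diam_lt (hJ hmid) hmid (isBounded_Icc 0 1)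
      (by rw [Real.diam_Icc zero_le_one]; norm_num)
  obtain ⟨k, hk⟩ := exists_pow_lt_of_lt_one (half_pos hε) (max_lt hl₀.2 hl₁.2)
  refine ⟨k, fun x hx => ?_⟩
  obtain ⟨y, hy, hxy⟩ :=
    mem_thickening_iff.1 (subset_thickening_iterate hlip₀ hlip₁ hK hcover hL hstart k hx)
  refine ⟨y, hy, ?_⟩
  rw [← Real.dist_eq]
  calc dist x y < (K : ℝ) ^ k * 2 := hxy
    _ ≤ ε := by change max l₀ l₁ ^ k * 2 ≤ ε; linarith
end
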